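/- Let δ > 0, let e₁ = (1,0,0) ∈ ℝ³, and let W : ℝ³ → [0,∞) be a continuous function, not identically zero, supported in the closed ball of radius 1/6 centered at e₁/6. Let N ≥ 3 be an integer, set η_k = k^{-1/3} and ε_N = 1/log(log N), and define v₀ : ℝ³ → [0,∞) by v₀(ξ) = ε_N ∑_{k=1}^N 2^{2k/3} η_k · (W(ξ + (2^k - 1)e₁) + W(ξ - (2^k - 1)e₁))/2. If v : [0,δ/2] × ℝ³ → [0,∞) solves the Fourier-side cubic heat integral equation with datum v₀, then for every ξ ∈ ℝ³: v(δ/2, ξ) ≥ τ_N · (W * W * W)(ξ + e₁), where τ_N = ε_N³ ∑_{k=1}^{N-1} (2^{2k - 7/3}/(3·2^{2k+1} - 1)) η_k² η_{k+1} e^{-2δ} (1 - e^{(δ/2)(1 - 3·2^{2k+1})}). -/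

import Mathlib

open MeasureTheory

noncomputable section

/-- `ℝ³` as Euclidean space. -/
abbrev E3 := EuclideanSpace ℝ (Fin 3)

/-- The first standard basis vector `e₁ = (1,0,0)` of `ℝ³`. -/
def e1 : E3 := EuclideanSpace.single 0 1

/-- Convolution of two `[0,∞]`-valued functions on `ℝ³` (lower Lebesgue integral). -/
def lconv (f g : E3 → ENNReal) : E3 → ENNReal := fun ξ => ∫⁻ y, f y * g (ξ - y)

/-- The triple convolution `f * f * f` of a `[0,∞]`-valued function on `ℝ³`. -/
def lconv3 (f : E3 → ENNReal) : E3 → ENNReal := lconv (lconv f f) f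

/-- `v` solves the Fourier-side cubic heat integral equation on `[0,T]` with datum `v₀`. -/
def SolvesFourierCubic (T : ℝ) (v₀ : E3 → ℝ) (v : ℝ → E3 → ℝ) : Prop :=
  ∀ t ∈ Set.Icc (0 : ℝ) T, ∀ ξ : E3,
    ENNReal.ofReal (v t ξ) =
      ENNReal.ofReal (Real.exp (-t * ‖ξ‖ ^ 2) * v₀ ξ) +
        ∫⁻ s in Set.Ioo (0 : ℝ) t,
          ENNReal.ofReal (Real.exp (-(t - s) * ‖ξ‖ ^ 2)) *
            lconv3 (fun y => ENNReal.ofReal (v s y)) ξ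

/-- `η_k = k^{-1/3}`. -/
def eta (k : ℕ) : ℝ := (k : ℝ) ^ (-(1 : ℝ) / 3)

/-- `ε_N = 1 / log (log N)`. -/
def eps (N : ℕ) : ℝ := 1 / Real.log (Real.log N)

/-!
Since all terms of the Duhamel formula are nonnegative, `v(s, ·) ≥ e^{-s|·|²} v₀`, and on the
bump of `v₀` centred at `±(2^k - 1) e₁` the heat factor is at least `e^{-s (2^k - 2/3)²}`.
In the cubic term keep only the interactions of two bumps at `(2^k - 1) e₁` with one bump at
`-(2^{k+1} - 1) e₁`: these centres add up to `-e₁`, so each such interaction is a multiple of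
`(W * W * W)(ξ + e₁)`, decaying in time at rate `2 (2^k - 2/3)² + (2^{k+1} - 2/3)² ≤ 3·2^{2k+1} - 1`.
Where `(W * W * W)(ξ + e₁) ≠ 0` we have `|ξ| ≤ 1`, so the outer heat factor is at least `e^{-2δ}`,
and integrating the decay over `s ∈ (0, δ/2)` produces `τ_N`.
-/

open scoped ENNReal
open Finset Real

lemma sum_lintegral_le_lintegral_sum {α ι : Type*} [MeasurableSpace α] (μ : Measure α)
    (s : Finset ι) (f : ι → α → ℝ≥0∞) :
    ∑ i ∈ s, ∫⁻ a, f i a ∂μ ≤ ∫⁻ a, ∑ i ∈ s, f i a ∂μ := by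
  classical
  induction s using Finset.induction_on with
  | empty => simp
  | insert i s hi ih =>
    simp only [sum_insert hi]
    exact (add_le_add_right ih _).trans (le_lintegral_add _ _)

lemma sum_mul_le_sum_mul_sum {ι R : Type*} [CommSemiring R] [PartialOrder R] [IsOrderedRing R]
    [CanonicallyOrderedAdd R] (s : Finset ι) (a b : ι → R) :
    ∑ i ∈ s, a i * b i ≤ (∑ i ∈ s, a i) * ∑ i ∈ s, b i := by
  rw [sum_mul]
  exact sum_le_sum fun i hi => mul_le_mul_right (single_le_sum (fun _ _ => zero_le) hi) _

lemma sum_lconv_le_lconv {ι : Type*} (s : Finset ι) {F G : ι → E3 → ℝ≥0∞} {f g : E3 → ℝ≥0∞}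
    (hF : ∀ x, ∑ i ∈ s, F i x ≤ f x) (hG : ∀ x, ∑ i ∈ s, G i x ≤ g x) (ξ : E3) :
    ∑ i ∈ s, lconv (F i) (G i) ξ ≤ lconv f g ξ :=
  calc ∑ i ∈ s, lconv (F i) (G i) ξ ≤ ∫⁻ y, ∑ i ∈ s, F i y * G i (ξ - y) :=
        sum_lintegral_le_lintegral_sum _ _ _
    _ ≤ ∫⁻ y, (∑ i ∈ s, F i y) * ∑ i ∈ s, G i (ξ - y) :=
        lintegral_mono fun _ => sum_mul_le_sum_mul_sum _ _ _
    _ ≤ lconv f g ξ := lintegral_mono fun y => mul_le_mul' (hF y) (hG _)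

lemma lconv_const_mul_shift (F G : E3 → ℝ≥0∞) {c₁ c₂ : ℝ≥0∞} (hc : c₁ * c₂ ≠ ∞)
    (a b ξ : E3) :
    lconv (fun x => c₁ * F (x - a)) (fun x => c₂ * G (x - b)) ξ
      = c₁ * c₂ * lconv F G (ξ - (a + b)) := by
  have hshift : ∀ y, ξ - y - b = ξ - (a + b) - (y - a) := fun y => by abel
  calc ∫⁻ y, c₁ * F (y - a) * (c₂ * G (ξ - y - b))
      = ∫⁻ y, c₁ * c₂ * (F (y - a) * G (ξ - (a + b) - (y - a))) := by
        refine lintegral_congr fun y => ?_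
        rw [hshift]
        ring
    _ = c₁ * c₂ * ∫⁻ y, F y * G (ξ - (a + b) - y) := by
        rw [lintegral_const_mul' _ _ hc,
          lintegral_sub_right_eq_self (fun y => F y * G (ξ - (a + b) - y)) a]

lemma support_lconv_subset {F G : E3 → ℝ≥0∞} {a b : E3} {r₁ r₂ : ℝ}
    (hF : Function.support F ⊆ Metric.closedBall a r₁)
    (hG : Function.support G ⊆ Metric.closedBall b r₂) :
    Function.support (lconv F G) ⊆ Metric.closedBall (a + b) (r₁ + r₂) := by
  intro ξ hξ
  by_contra hout
  refine hξ ((lintegral_congr fun y => ?_).trans lintegral_zero)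
  by_contra hy
  obtain ⟨hy₁, hy₂⟩ := mul_ne_zero_iff.1 hy
  have hdist := dist_add_add_le y (ξ - y) a b
  rw [add_sub_cancel] at hdist
  exact hout (hdist.trans (add_le_add (hF hy₁) (hG hy₂)))

lemma lconv3_const_mul_shift (F : E3 → ℝ≥0∞) {c₁ c₂ : ℝ≥0∞} (h₁ : c₁ ≠ ∞) (h₂ : c₂ ≠ ∞)
    (a b ξ : E3) :
    lconv (lconv (fun x => c₁ * F (x - a)) (fun x => c₁ * F (x - a)))
        (fun x => c₂ * F (x - b)) ξ
      = c₁ * c₁ * c₂ * lconv3 F (ξ - (a + a + b)) := by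
  have hFF : lconv (fun x => c₁ * F (x - a)) (fun x => c₁ * F (x - a))
      = fun y => c₁ * c₁ * lconv F F (y - (a + a)) :=
    funext (lconv_const_mul_shift F F (ENNReal.mul_ne_top h₁ h₁) a a)
  rw [hFF, lconv_const_mul_shift _ _ (ENNReal.mul_ne_top (ENNReal.mul_ne_top h₁ h₁) h₂)]
  rfl

lemma lintegral_exp_neg_mul_Ioo {M T : ℝ} (hM : 0 < M) (hT : 0 ≤ T) :
    ∫⁻ s in Set.Ioo 0 T, ENNReal.ofReal (exp (-(M * s)))
      = ENNReal.ofReal ((1 - exp (-(M * T))) / M) := by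
  have hint : ∫ s in 0..T, exp (-(M * s)) = (1 - exp (-(M * T))) / M := by
    have := intervalIntegral.integral_comp_mul_left (fun s => exp s) (c := -M) (a := 0) (b := T)
      (neg_ne_zero.2 hM.ne')
    simp only [neg_mul, mul_zero, integral_exp] at this
    rw [this, smul_eq_mul, exp_zero]
    field_simp
    ring
  rw [← hint, intervalIntegral.integral_of_le hT, integral_Ioc_eq_integral_Ioo,
    ofReal_integral_eq_lintegral_ofReal]
  · exact (by fun_prop : Continuous fun s => exp (-(M * s))).integrableOn_Icc.mono_set
      Set.Ioo_subset_Icc_self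
  · exact Filter.Eventually.of_forall fun s => (exp_pos _).le

lemma eps_pos {N : ℕ} (hN : 3 ≤ N) : 0 < eps N := by
  have hlog3 : 1 < log 3 := by
    rw [lt_log_iff_exp_lt (by norm_num)]
    exact exp_one_lt_d9.trans (by norm_num)
  have hlogN : 1 < log N := hlog3.trans_le (log_le_log (by norm_num) (by exact_mod_cast hN))
  exact one_div_pos.2 (log_pos hlogN)

lemma eta_nonneg (k : ℕ) : 0 ≤ eta k := Real.rpow_nonneg (Nat.cast_nonneg k) _

/-- The datum `v₀` of the theorem; each of its two bumps `W (· ± (2 ^ k - 1) • e1)` carries the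
weight `bumpCoef N k`. -/
def initialDatum (W : E3 → ℝ) (N : ℕ) : E3 → ℝ := fun ξ =>
  eps N * ∑ k ∈ Finset.Icc 1 N,
    (2 : ℝ) ^ (2 * (k : ℝ) / 3) * eta k *
      (W (ξ + ((2 : ℝ) ^ k - 1) • e1) + W (ξ - ((2 : ℝ) ^ k - 1) • e1)) / 2

def bumpCoef (N k : ℕ) : ℝ := eps N * ((2 : ℝ) ^ (2 * (k : ℝ) / 3) * eta k) / 2

lemma bumpCoef_nonneg {N : ℕ} (hε : 0 ≤ eps N) (k : ℕ) : 0 ≤ bumpCoef N k := by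
  have := eta_nonneg k
  unfold bumpCoef
  positivity

lemma bumpCoef_sq_mul_bumpCoef_succ (N k : ℕ) :
    bumpCoef N k ^ 2 * bumpCoef N (k + 1)
      = eps N ^ 3 * eta k ^ 2 * eta (k + 1) * (2 : ℝ) ^ (2 * (k : ℝ) - 7 / 3) := by
  have hpow : ((2 : ℝ) ^ (2 * (k : ℝ) / 3)) ^ 2 * (2 : ℝ) ^ (2 * ((k + 1 : ℕ) : ℝ) / 3)
      = (2 : ℝ) ^ (2 * (k : ℝ) - 7 / 3) * 2 ^ (3 : ℝ) := by
    rw [← Real.rpow_natCast _ 2, ← Real.rpow_mul zero_le_two, ← Real.rpow_add two_pos,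
      ← Real.rpow_add two_pos]
    congr 1
    push_cast
    ring
  have h8 : (2 : ℝ) ^ (3 : ℝ) = 8 := by norm_num
  unfold bumpCoef
  linear_combination (eps N ^ 3 * eta k ^ 2 * eta (k + 1) / 8) * hpow
    + (eps N ^ 3 * eta k ^ 2 * eta (k + 1) * (2 : ℝ) ^ (2 * (k : ℝ) - 7 / 3) / 8) * h8

lemma norm_e1 : ‖e1‖ = 1 := by simp [e1]

lemma norm_le_of_mem_support {W : E3 → ℝ}
    (hWsupp : Function.support W ⊆ Metric.closedBall ((1 / 6 : ℝ) • e1) (1 / 6))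
    {y : E3} (hy : y ∈ Function.support W) : ‖y‖ ≤ 1 / 3 := by
  have h := hWsupp hy
  rw [Metric.mem_closedBall, dist_eq_norm] at h
  calc ‖y‖ ≤ ‖y - (1 / 6 : ℝ) • e1‖ + ‖(1 / 6 : ℝ) • e1‖ := norm_le_norm_sub_add _ _
    _ ≤ 1 / 6 + 1 / 6 := by
      rw [norm_smul, norm_e1]
      norm_num
      linarith
    _ = 1 / 3 := by norm_num

lemma norm_le_one_of_lconv3_ne_zero {W : E3 → ℝ}
    (hWsupp : Function.support W ⊆ Metric.closedBall ((1 / 6 : ℝ) • e1) (1 / 6))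
    {ξ : E3} (h : lconv3 (fun y => ENNReal.ofReal (W y)) (ξ + e1) ≠ 0) : ‖ξ‖ ≤ 1 := by
  set c : E3 := (1 / 6 : ℝ) • e1
  have hsupp : Function.support (fun y => ENNReal.ofReal (W y)) ⊆ Metric.closedBall c (1 / 6) :=
    (Function.support_comp_subset ENNReal.ofReal_zero W).trans hWsupp
  have h3 := support_lconv_subset (support_lconv_subset hsupp hsupp) hsupp h
  rw [Metric.mem_closedBall, dist_eq_norm] at h3
  have hc : ξ + e1 - (c + c + c) = ξ + (1 / 2 : ℝ) • e1 := by module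
  rw [hc] at h3
  calc ‖ξ‖ ≤ ‖ξ + (1 / 2 : ℝ) • e1‖ + ‖(1 / 2 : ℝ) • e1‖ := norm_le_add_norm_add _ _
    _ ≤ 1 := by
      rw [norm_smul, norm_e1]
      norm_num at h3 ⊢
      linarith

lemma exp_mul_shift_le {W : E3 → ℝ} (hW0 : ∀ ξ, 0 ≤ W ξ)
    (hWsupp : Function.support W ⊆ Metric.closedBall ((1 / 6 : ℝ) • e1) (1 / 6))
    {s : ℝ} (hs : 0 ≤ s) (x : ℝ) (ζ : E3) :
    exp (-(s * (|x| + 1 / 3) ^ 2)) * W (ζ - x • e1)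
      ≤ exp (-s * ‖ζ‖ ^ 2) * (W (ζ + |x| • e1) + W (ζ - |x| • e1)) := by
  rcases eq_or_ne (W (ζ - x • e1)) 0 with h0 | h0
  · rw [h0, mul_zero]
    exact mul_nonneg (exp_pos _).le (add_nonneg (hW0 _) (hW0 _))
  have hζ : ‖ζ‖ ≤ |x| + 1 / 3 := by
    calc ‖ζ‖ ≤ ‖ζ - x • e1‖ + ‖x • e1‖ := norm_le_norm_sub_add _ _
      _ ≤ |x| + 1 / 3 := by
        rw [norm_smul, norm_e1, mul_one, Real.norm_eq_abs]
        linarith [norm_le_of_mem_support hWsupp h0]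
  have hexp : exp (-(s * (|x| + 1 / 3) ^ 2)) ≤ exp (-s * ‖ζ‖ ^ 2) :=
    exp_le_exp.2 (by nlinarith [pow_le_pow_left₀ (norm_nonneg ζ) hζ 2])
  have hW : W (ζ - x • e1) ≤ W (ζ + |x| • e1) + W (ζ - |x| • e1) := by
    rcases abs_choice x with h | h <;> rw [h]
    · exact le_add_of_nonneg_left (hW0 _)
    · rw [neg_smul, sub_neg_eq_add]
      exact le_add_of_nonneg_right (hW0 _)
  exact mul_le_mul hexp hW (hW0 _) (exp_pos _).le

lemma sum_bump_le_exp_mul_initialDatum {W : E3 → ℝ} (hW0 : ∀ ξ, 0 ≤ W ξ)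
    (hWsupp : Function.support W ⊆ Metric.closedBall ((1 / 6 : ℝ) • e1) (1 / 6))
    {N : ℕ} (hε : 0 ≤ eps N) {s : ℝ} (hs : 0 ≤ s) {S : Finset ℕ} (hS : S ⊆ Icc 1 N)
    (x : ℕ → ℝ) (hx : ∀ k ∈ S, |x k| = 2 ^ k - 1) (ζ : E3) :
    ∑ k ∈ S, bumpCoef N k * exp (-(s * (2 ^ k - 2 / 3) ^ 2)) * W (ζ - x k • e1)
      ≤ exp (-s * ‖ζ‖ ^ 2) * initialDatum W N ζ := by
  set term : ℕ → ℝ := fun k => exp (-s * ‖ζ‖ ^ 2) * (eps N * ((2 : ℝ) ^ (2 * (k : ℝ) / 3) *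
    eta k * (W (ζ + ((2 : ℝ) ^ k - 1) • e1) + W (ζ - ((2 : ℝ) ^ k - 1) • e1)) / 2))
  have hterm : ∀ k, 0 ≤ term k := fun k => by
    have := eta_nonneg k
    have := hW0 (ζ + ((2 : ℝ) ^ k - 1) • e1)
    have := hW0 (ζ - ((2 : ℝ) ^ k - 1) • e1)
    positivity
  calc ∑ k ∈ S, bumpCoef N k * exp (-(s * (2 ^ k - 2 / 3) ^ 2)) * W (ζ - x k • e1)
      ≤ ∑ k ∈ S, term k := sum_le_sum fun k hk => by
        have h := exp_mul_shift_le hW0 hWsupp hs (x k) ζ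
        rw [hx k hk, show (2 : ℝ) ^ k - 1 + 1 / 3 = 2 ^ k - 2 / 3 by ring] at h
        calc bumpCoef N k * exp (-(s * (2 ^ k - 2 / 3) ^ 2)) * W (ζ - x k • e1)
            = bumpCoef N k * (exp (-(s * (2 ^ k - 2 / 3) ^ 2)) * W (ζ - x k • e1)) := by ring
          _ ≤ bumpCoef N k * (exp (-s * ‖ζ‖ ^ 2) *
                (W (ζ + ((2 : ℝ) ^ k - 1) • e1) + W (ζ - ((2 : ℝ) ^ k - 1) • e1))) :=
            mul_le_mul_of_nonneg_left h (bumpCoef_nonneg hε k)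
          _ = term k := by unfold bumpCoef term; ring
    _ ≤ ∑ k ∈ Icc 1 N, term k := sum_le_sum_of_subset_of_nonneg hS fun k _ _ => hterm k
    _ = exp (-s * ‖ζ‖ ^ 2) * initialDatum W N ζ := by simp only [term, initialDatum, mul_sum]

lemma two_mul_sq_add_sq_le (k : ℕ) :
    2 * ((2 : ℝ) ^ k - 2 / 3) ^ 2 + ((2 : ℝ) ^ (k + 1) - 2 / 3) ^ 2
      ≤ 3 * (2 : ℝ) ^ (2 * k + 1) - 1 := by
  have h1 : (1 : ℝ) ≤ 2 ^ k := one_le_pow₀ one_le_two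
  have h2 : (2 : ℝ) ^ (k + 1) = 2 * 2 ^ k := pow_succ' 2 k
  have h3 : (2 : ℝ) ^ (2 * k + 1) = 2 * (2 ^ k) ^ 2 := by rw [pow_succ', pow_mul']
  rw [h2, h3]
  nlinarith

lemma exp_neg_mul_le_exp_mul_exp_mul_exp {s : ℝ} (hs : 0 ≤ s) (k : ℕ) :
    exp (-((3 * 2 ^ (2 * k + 1) - 1) * s))
      ≤ exp (-(s * (2 ^ k - 2 / 3) ^ 2)) * exp (-(s * (2 ^ k - 2 / 3) ^ 2)) *
        exp (-(s * (2 ^ (k + 1) - 2 / 3) ^ 2)) := by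
  rw [← exp_add, ← exp_add, exp_le_exp]
  linarith [mul_le_mul_of_nonneg_right (two_mul_sq_add_sq_le k) hs]

namespace SolvesFourierCubic

variable {T : ℝ} {v₀ : E3 → ℝ} {v : ℝ → E3 → ℝ} {W : E3 → ℝ} {N : ℕ}

lemma ofReal_exp_mul_le (hsol : SolvesFourierCubic T v₀ v) {t : ℝ} (ht : t ∈ Set.Icc 0 T)
    (ξ : E3) : ENNReal.ofReal (exp (-t * ‖ξ‖ ^ 2) * v₀ ξ) ≤ ENNReal.ofReal (v t ξ) := by
  rw [hsol t ht ξ]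
  exact le_self_add

lemma lintegral_le (hsol : SolvesFourierCubic T v₀ v) {t : ℝ} (ht : t ∈ Set.Icc 0 T) (ξ : E3) :
    ∫⁻ s in Set.Ioo 0 t, ENNReal.ofReal (exp (-(t - s) * ‖ξ‖ ^ 2)) *
        lconv3 (fun y => ENNReal.ofReal (v s y)) ξ
      ≤ ENNReal.ofReal (v t ξ) := by
  rw [hsol t ht ξ]
  exact le_add_self

lemma sum_bump_le (hsol : SolvesFourierCubic T (initialDatum W N) v) (hW0 : ∀ ξ, 0 ≤ W ξ)
    (hWsupp : Function.support W ⊆ Metric.closedBall ((1 / 6 : ℝ) • e1) (1 / 6))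
    (hε : 0 ≤ eps N) {s : ℝ} (hs : s ∈ Set.Icc 0 T) {S : Finset ℕ} (hS : S ⊆ Icc 1 N)
    (x : ℕ → ℝ) (hx : ∀ k ∈ S, |x k| = 2 ^ k - 1) (ζ : E3) :
    ∑ k ∈ S, ENNReal.ofReal (bumpCoef N k * exp (-(s * (2 ^ k - 2 / 3) ^ 2))) *
        ENNReal.ofReal (W (ζ - x k • e1))
      ≤ ENNReal.ofReal (v s ζ) := by
  have hC : ∀ k, 0 ≤ bumpCoef N k * exp (-(s * (2 ^ k - 2 / 3) ^ 2)) := fun k =>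
    mul_nonneg (bumpCoef_nonneg hε k) (exp_pos _).le
  calc _ = ENNReal.ofReal (∑ k ∈ S,
        bumpCoef N k * exp (-(s * (2 ^ k - 2 / 3) ^ 2)) * W (ζ - x k • e1)) := by
        rw [ENNReal.ofReal_sum_of_nonneg fun k _ => mul_nonneg (hC k) (hW0 _)]
        exact sum_congr rfl fun k _ => (ENNReal.ofReal_mul (hC k)).symm
    _ ≤ ENNReal.ofReal (exp (-s * ‖ζ‖ ^ 2) * initialDatum W N ζ) :=
        ENNReal.ofReal_le_ofReal
          (sum_bump_le_exp_mul_initialDatum hW0 hWsupp hε hs.1 hS x hx ζ)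
    _ ≤ ENNReal.ofReal (v s ζ) := hsol.ofReal_exp_mul_le hs ζ

lemma sum_le_lconv3 (hsol : SolvesFourierCubic T (initialDatum W N) v) (hW0 : ∀ ξ, 0 ≤ W ξ)
    (hWsupp : Function.support W ⊆ Metric.closedBall ((1 / 6 : ℝ) • e1) (1 / 6))
    (hε : 0 ≤ eps N) {s : ℝ} (hs : s ∈ Set.Icc 0 T) (ξ : E3) :
    ∑ k ∈ Icc 1 (N - 1), ENNReal.ofReal (bumpCoef N k ^ 2 * bumpCoef N (k + 1)) *
        ENNReal.ofReal (exp (-((3 * 2 ^ (2 * k + 1) - 1) * s))) *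
        lconv3 (fun y => ENNReal.ofReal (W y)) (ξ + e1)
      ≤ lconv3 (fun y => ENNReal.ofReal (v s y)) ξ := by
  set C : ℕ → ℝ := fun k => bumpCoef N k * exp (-(s * (2 ^ k - 2 / 3) ^ 2))
  have hC : ∀ k, 0 ≤ C k := fun k => mul_nonneg (bumpCoef_nonneg hε k) (exp_pos _).le
  set F : E3 → ℝ≥0∞ := fun y => ENNReal.ofReal (W y)
  set a : ℕ → ℝ := fun k => (2 : ℝ) ^ k - 1
  have ha : ∀ k, |a k| = 2 ^ k - 1 := fun k =>
    abs_of_nonneg (sub_nonneg.2 (one_le_pow₀ one_le_two))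
  have hG : ∀ z, ∑ k ∈ Icc 1 (N - 1), ENNReal.ofReal (C k) * F (z - a k • e1)
      ≤ ENNReal.ofReal (v s z) := fun z =>
    hsol.sum_bump_le hW0 hWsupp hε hs (Icc_subset_Icc_right (N.sub_le 1)) a (fun k _ => ha k) z
  have hH : ∀ z, ∑ k ∈ Icc 1 (N - 1), ENNReal.ofReal (C (k + 1)) * F (z - (-a (k + 1)) • e1)
      ≤ ENNReal.ofReal (v s z) := fun z => by
    have hS : (Icc 1 (N - 1)).image (· + 1) ⊆ Icc 1 N := fun j hj => by
      simp only [mem_image, mem_Icc] at hj ⊢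
      omega
    have h := hsol.sum_bump_le hW0 hWsupp hε hs hS (fun j => -a j)
      (fun j _ => by rw [abs_neg, ha]) z
    rwa [sum_image fun _ _ _ _ => add_right_cancel] at h
  refine le_trans (sum_le_sum fun k _ => ?_)
    (sum_lconv_le_lconv _ (fun y => sum_lconv_le_lconv _ hG hG y) hH ξ)
  have hshift : ξ - (a k • e1 + a k • e1 + (-a (k + 1)) • e1) = ξ + e1 := by
    simp only [a, pow_succ]
    module
  rw [lconv3_const_mul_shift _ ENNReal.ofReal_ne_top ENNReal.ofReal_ne_top, hshift,
    ← ENNReal.ofReal_mul (hC k), ← ENNReal.ofReal_mul (mul_nonneg (hC k) (hC k)),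
    ← ENNReal.ofReal_mul (mul_nonneg (pow_nonneg (bumpCoef_nonneg hε k) 2)
      (bumpCoef_nonneg hε (k + 1)))]
  refine mul_le_mul' (ENNReal.ofReal_le_ofReal ?_) le_rfl
  calc bumpCoef N k ^ 2 * bumpCoef N (k + 1) * exp (-((3 * 2 ^ (2 * k + 1) - 1) * s))
      ≤ bumpCoef N k ^ 2 * bumpCoef N (k + 1) * (exp (-(s * (2 ^ k - 2 / 3) ^ 2)) *
          exp (-(s * (2 ^ k - 2 / 3) ^ 2)) * exp (-(s * (2 ^ (k + 1) - 2 / 3) ^ 2))) :=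
        mul_le_mul_of_nonneg_left (exp_neg_mul_le_exp_mul_exp_mul_exp hs.1 k)
          (mul_nonneg (pow_nonneg (bumpCoef_nonneg hε k) 2) (bumpCoef_nonneg hε (k + 1)))
    _ = C k * C k * C (k + 1) := by simp only [C]; ring

end SolvesFourierCubic

lemma eps_pow_three_mul_eq (δ : ℝ) (N k : ℕ) :
    eps N ^ 3 * ((2 : ℝ) ^ (2 * (k : ℝ) - 7 / 3) / (3 * (2 : ℝ) ^ (2 * k + 1) - 1) *
        eta k ^ 2 * eta (k + 1) * exp (-2 * δ) *
        (1 - exp (δ / 2 * (1 - 3 * (2 : ℝ) ^ (2 * k + 1)))))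
      = exp (-2 * δ) * (bumpCoef N k ^ 2 * bumpCoef N (k + 1)) *
        ((1 - exp (-((3 * 2 ^ (2 * k + 1) - 1) * (δ / 2)))) / (3 * 2 ^ (2 * k + 1) - 1)) := by
  rw [bumpCoef_sq_mul_bumpCoef_succ,
    show δ / 2 * (1 - 3 * (2 : ℝ) ^ (2 * k + 1)) = -((3 * 2 ^ (2 * k + 1) - 1) * (δ / 2)) by ring]
  ring

lemma ofReal_eps_pow_three_mul_sum_mul_eq {δ : ℝ} (hδ : 0 < δ) {N : ℕ} (hε : 0 ≤ eps N)
    (L : ℝ≥0∞) :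
    ENNReal.ofReal (eps N ^ 3 * ∑ k ∈ Icc 1 (N - 1),
        (2 : ℝ) ^ (2 * (k : ℝ) - 7 / 3) / (3 * (2 : ℝ) ^ (2 * k + 1) - 1) *
          eta k ^ 2 * eta (k + 1) * exp (-2 * δ) *
          (1 - exp (δ / 2 * (1 - 3 * (2 : ℝ) ^ (2 * k + 1))))) * L
      = ∑ k ∈ Icc 1 (N - 1), ∫⁻ s in Set.Ioo 0 (δ / 2), ENNReal.ofReal (exp (-2 * δ)) *
          (ENNReal.ofReal (bumpCoef N k ^ 2 * bumpCoef N (k + 1)) *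
            ENNReal.ofReal (exp (-((3 * 2 ^ (2 * k + 1) - 1) * s))) * L) := by
  have hM : ∀ k : ℕ, (0 : ℝ) < 3 * 2 ^ (2 * k + 1) - 1 := fun k => by
    linarith [one_le_pow₀ (M₀ := ℝ) one_le_two (n := 2 * k + 1)]
  have hcc : ∀ k, 0 ≤ bumpCoef N k ^ 2 * bumpCoef N (k + 1) := fun k =>
    mul_nonneg (pow_nonneg (bumpCoef_nonneg hε k) 2) (bumpCoef_nonneg hε (k + 1))
  rw [mul_sum, ENNReal.ofReal_sum_of_nonneg, sum_mul]
  · refine sum_congr rfl fun k _ => ?_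
    rw [lintegral_congr fun s => (by ring : ENNReal.ofReal (exp (-2 * δ)) *
        (ENNReal.ofReal (bumpCoef N k ^ 2 * bumpCoef N (k + 1)) *
          ENNReal.ofReal (exp (-((3 * 2 ^ (2 * k + 1) - 1) * s))) * L)
        = ENNReal.ofReal (exp (-2 * δ)) * ENNReal.ofReal (bumpCoef N k ^ 2 * bumpCoef N (k + 1))
          * L * ENNReal.ofReal (exp (-((3 * 2 ^ (2 * k + 1) - 1) * s)))),
      lintegral_const_mul _ (by fun_prop), lintegral_exp_neg_mul_Ioo (hM k) (half_pos hδ).le,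
      eps_pow_three_mul_eq, ENNReal.ofReal_mul (mul_nonneg (exp_pos _).le (hcc k)),
      ENNReal.ofReal_mul (exp_pos _).le]
    ring
  · intro k _
    rw [eps_pow_three_mul_eq]
    refine mul_nonneg (mul_nonneg (exp_pos _).le (hcc k)) (div_nonneg ?_ (hM k).le)
    exact sub_nonneg.2 (exp_le_one_iff.2 (neg_nonpos.2 (by have := hM k; positivity)))

theorem stmt_10_general (δ : ℝ) (hδ : 0 < δ)
    (W : E3 → ℝ) (hWnonneg : ∀ ξ, 0 ≤ W ξ)
    (hWsupp : Function.support W ⊆ Metric.closedBall ((1 / 6 : ℝ) • e1) (1 / 6))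
    (N : ℕ) (hN : 3 ≤ N)
    (v₀ : E3 → ℝ)
    (hv₀ : v₀ = fun ξ =>
      eps N * ∑ k ∈ Finset.Icc 1 N,
        (2 : ℝ) ^ (2 * (k : ℝ) / 3) * eta k *
          (W (ξ + ((2 : ℝ) ^ k - 1) • e1) + W (ξ - ((2 : ℝ) ^ k - 1) • e1)) / 2)
    (v : ℝ → E3 → ℝ)
    (hsol : SolvesFourierCubic (δ / 2) v₀ v) :
    ∀ ξ : E3,
      ENNReal.ofReal
          (eps N ^ 3 * ∑ k ∈ Finset.Icc 1 (N - 1),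
            (2 : ℝ) ^ (2 * (k : ℝ) - 7 / 3) / (3 * (2 : ℝ) ^ (2 * k + 1) - 1) *
              eta k ^ 2 * eta (k + 1) * Real.exp (-2 * δ) *
              (1 - Real.exp (δ / 2 * (1 - 3 * (2 : ℝ) ^ (2 * k + 1))))) *
        lconv3 (fun y => ENNReal.ofReal (W y)) (ξ + e1) ≤
      ENNReal.ofReal (v (δ / 2) ξ) := by
  intro ξ
  subst hv₀
  replace hsol : SolvesFourierCubic (δ / 2) (initialDatum W N) v := hsol
  have hε := (eps_pos hN).le
  rcases eq_or_ne (lconv3 (fun y => ENNReal.ofReal (W y)) (ξ + e1)) 0 with hL | hL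
  · simp [hL]
  have hξ : ‖ξ‖ ^ 2 ≤ 1 := pow_le_one₀ (norm_nonneg ξ) (norm_le_one_of_lconv3_ne_zero hWsupp hL)
  rw [ofReal_eps_pow_three_mul_sum_mul_eq hδ hε]
  refine (sum_lintegral_le_lintegral_sum _ _ _).trans
    ((setLIntegral_mono' measurableSet_Ioo fun s hs => ?_).trans
      (hsol.lintegral_le ⟨by positivity, le_rfl⟩ ξ))
  rw [← mul_sum]
  exact mul_le_mul' (ENNReal.ofReal_le_ofReal (exp_le_exp.2 (by nlinarith [hs.1, hs.2])))
    (hsol.sum_le_lconv3 hWnonneg hWsupp hε (Set.Ioo_subset_Icc_self hs) ξ)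

theorem stmt_10 (δ : ℝ) (hδ : 0 < δ)
    (W : E3 → ℝ) (hWcont : Continuous W) (hWnonneg : ∀ ξ, 0 ≤ W ξ) (hWne : W ≠ 0)
    (hWsupp : Function.support W ⊆ Metric.closedBall ((1 / 6 : ℝ) • e1) (1 / 6))
    (N : ℕ) (hN : 3 ≤ N)
    (v₀ : E3 → ℝ)
    (hv₀ : v₀ = fun ξ =>
      eps N * ∑ k ∈ Finset.Icc 1 N,
        (2 : ℝ) ^ (2 * (k : ℝ) / 3) * eta k *
          (W (ξ + ((2 : ℝ) ^ k - 1) • e1) + W (ξ - ((2 : ℝ) ^ k - 1) • e1)) / 2)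
    (v : ℝ → E3 → ℝ) (hvmeas : Measurable (Function.uncurry v))
    (hvnonneg : ∀ t ξ, 0 ≤ v t ξ)
    (hsol : SolvesFourierCubic (δ / 2) v₀ v) :
    ∀ ξ : E3,
      ENNReal.ofReal
          (eps N ^ 3 * ∑ k ∈ Finset.Icc 1 (N - 1),
            (2 : ℝ) ^ (2 * (k : ℝ) - 7 / 3) / (3 * (2 : ℝ) ^ (2 * k + 1) - 1) *
              eta k ^ 2 * eta (k + 1) * Real.exp (-2 * δ) *
              (1 - Real.exp (δ / 2 * (1 - 3 * (2 : ℝ) ^ (2 * k + 1))))) *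
        lconv3 (fun y => ENNReal.ofReal (W y)) (ξ + e1) ≤
      ENNReal.ofReal (v (δ / 2) ξ) :=
  stmt_10_general δ hδ W hWnonneg hWsupp N hN v₀ hv₀ v hsol

end
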